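/- For the bisimulation distance game associated with labelled binary trees T and T', a position (w, w', ε) is winning for Verifier if and only if the bisimulation distance d*(T_w, T'_{w'}) between the subtrees rooted at w and w' is at most ε. -/
import Mathlib


open unitInterval

instance : Fact ((0:ℝ) ≤ 1) := ⟨zero_le_one⟩

/-- Finite binary strings. -/
abbrev Word := List Bool

/-- A set of words is prefix-closed. -/
def PrefixClosed (U : Set Word) : Prop :=
  ∀ ⦃w : Word⦄, w ∈ U → ∀ ⦃v : Word⦄, v <+: w → v ∈ U

/-- A set of words is sibling-closed. -/
def SiblingClosed (U : Set Word) : Prop :=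
  ∀ w : Word, w ++ [false] ∈ U ↔ w ++ [true] ∈ U

/-- The distance lifting of `d` along the binary-tree functor
`F X = S0 ⊕ S2 × X × X`, induced by `f`. -/
def dlift {S0 S2 X Y : Type*} [DecidableEq S0] [DecidableEq S2]
    (f : I → I → I) (d : X → Y → I) :
    (S0 ⊕ S2 × X × X) → (S0 ⊕ S2 × Y × Y) → I
  | Sum.inl s, Sum.inl t => if s = t then 0 else 1
  | Sum.inr (s, x1, x2), Sum.inr (t, y1, y2) =>
      if s = t then f (d x1 y1) (d x2 y2) else 1
  | _, _ => 1

/-- The relation lifting along the binary-tree functor. -/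
def rlift {S0 S2 X Y : Type*} (R : X → Y → Prop) :
    (S0 ⊕ S2 × X × X) → (S0 ⊕ S2 × Y × Y) → Prop
  | Sum.inl s, Sum.inl t => s = t
  | Sum.inr (s, x1, x2), Sum.inr (t, y1, y2) => s = t ∧ R x1 y1 ∧ R x2 y2
  | _, _ => False

/-- A labelled binary tree: a prefix- and sibling-closed domain of words
containing the root, together with its successor function
`γ : U → S0 ⊕ S2 × U × U` sending a branching node to its label and
its two children. -/
structure LTree (S0 S2 : Type*) where
  U : Set Word
  prefixClosed : PrefixClosed U
  siblingClosed : SiblingClosed U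
  rootMem : ([] : Word) ∈ U
  γ : U → S0 ⊕ S2 × U × U
  γ_children : ∀ (w : U) (s : S2) (l r : U),
      γ w = Sum.inr (s, l, r) →
      (l : Word) = (w : Word) ++ [false] ∧ (r : Word) = (w : Word) ++ [true]

/-- The root of a labelled binary tree, as an element of its domain. -/
def LTree.root {S0 S2 : Type*} (T : LTree S0 S2) : T.U := ⟨[], T.rootMem⟩

/-- `d` is a bisimulation distance function between `T` and `T'`:
`d(w,w') ≥ d̄(γ w, γ' w')` for all `w, w'`. -/
def IsBisimDist {S0 S2 : Type*} [DecidableEq S0] [DecidableEq S2]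
    (f : I → I → I) (T T' : LTree S0 S2) (d : T.U → T'.U → I) : Prop :=
  ∀ (w : T.U) (w' : T'.U), dlift f d (T.γ w) (T'.γ w') ≤ d w w'

/-- The bisimulation distance: the greatest post-fixpoint of the lifted
functional in the pointwise reverse order, i.e. (by the Knaster–Tarski
formula) the pointwise infimum of all bisimulation distance functions. -/
noncomputable def dstar {S0 S2 : Type*} [DecidableEq S0] [DecidableEq S2]
    (f : I → I → I) (T T' : LTree S0 S2) (w : T.U) (w' : T'.U) : I :=
  ⨅ d : {d : T.U → T'.U → I // IsBisimDist f T T' d}, d.1 w w'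

/-- Winning positions for Verifier in the bisimulation distance game:
`p` is winning iff it belongs to some set `S` of positions at each of which
Verifier has a valid move `d` (i.e. `d̄(γ w, γ' w') ≤ ε`) all of whose
Falsifier responses `(v,v',ε')` with `d v v' ≤ ε'` stay in `S`
(stuck players lose, infinite plays are won by Verifier). -/
def BDWin {S0 S2 : Type*} [DecidableEq S0] [DecidableEq S2]
    (f : I → I → I) (T T' : LTree S0 S2) (p : T.U × T'.U × I) : Prop :=
  ∃ S : Set (T.U × T'.U × I), p ∈ S ∧
    ∀ q ∈ S, ∃ d : T.U → T'.U → I,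
      dlift f d (T.γ q.1) (T'.γ q.2.1) ≤ q.2.2 ∧
      ∀ (v : T.U) (v' : T'.U) (ε' : I), d v v' ≤ ε' → (v, v', ε') ∈ S

lemma dlift_mono {S0 S2 X Y : Type*} [DecidableEq S0] [DecidableEq S2]
    {f : I → I → I} (hf : ∀ x x' y y' : I, x ≤ x' → y ≤ y' → f x y ≤ f x' y')
    {d d' : X → Y → I} (h : ∀ x y, d x y ≤ d' x y) :
    ∀ (a : S0 ⊕ S2 × X × X) (b : S0 ⊕ S2 × Y × Y),
      dlift f d a b ≤ dlift f d' a b := by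
  rintro (s | ⟨s, x1, x2⟩) (t | ⟨t, y1, y2⟩)
  · exact le_rfl
  · exact le_rfl
  · exact le_rfl
  · show (if s = t then f (d x1 y1) (d x2 y2) else 1) ≤
      (if s = t then f (d' x1 y1) (d' x2 y2) else 1)
    split_ifs with hst
    · exact hf _ _ _ _ (h x1 y1) (h x2 y2)
    · exact le_rfl

/-- A position `(w, w', ε)` of the bisimulation distance game is winning for
Verifier iff the bisimulation distance of the subtrees rooted at `w` and `w'`
is at most `ε`. -/
theorem stmt10 {S0 S2 : Type*} [DecidableEq S0] [DecidableEq S2]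
    (f : I → I → I)
    (hf : ∀ x x' y y' : I, x ≤ x' → y ≤ y' → f x y ≤ f x' y')
    (T T' : LTree S0 S2) (w : T.U) (w' : T'.U) (ε : I) :
    BDWin f T T' (w, w', ε) ↔ dstar f T T' w w' ≤ ε := by
  constructor
  · rintro ⟨S, hpS, hS⟩
    let e : T.U → T'.U → I := fun v v' => sInf {ε | (v, v', ε) ∈ S}
    have heS : ∀ v v' ε, (v, v', ε) ∈ S → e v v' ≤ ε := fun v v' ε h => sInf_le h
    have hbisim : IsBisimDist f T T' e := by
      intro v v'
      show dlift f e (T.γ v) (T'.γ v') ≤ sInf {ε | (v, v', ε) ∈ S}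
      refine le_sInf fun ε hε => ?_
      obtain ⟨d, hd1, hd2⟩ := hS (v, v', ε) hε
      calc dlift f e (T.γ v) (T'.γ v')
          ≤ dlift f d (T.γ v) (T'.γ v') :=
            dlift_mono hf (fun x y => heS _ _ _ (hd2 x y (d x y) le_rfl)) _ _
        _ ≤ ε := hd1
    have h1 : dstar f T T' w w' ≤ e w w' :=
      iInf_le (fun d : {d : T.U → T'.U → I // IsBisimDist f T T' d} => d.1 w w')
        ⟨e, hbisim⟩
    exact h1.trans (heS _ _ _ hpS)
  · intro h
    have hstar : IsBisimDist f T T' (dstar f T T') := by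
      intro v v'
      show _ ≤ ⨅ d : {d : T.U → T'.U → I // IsBisimDist f T T' d}, d.1 v v'
      refine le_iInf fun d => ?_
      calc dlift f (dstar f T T') (T.γ v) (T'.γ v')
          ≤ dlift f d.1 (T.γ v) (T'.γ v') := by
            refine dlift_mono hf (fun x y => ?_) _ _
            exact iInf_le (fun d : {d : T.U → T'.U → I // IsBisimDist f T T' d}
              => d.1 x y) d
        _ ≤ d.1 v v' := d.2 v v'
    refine ⟨{q | dstar f T T' q.1 q.2.1 ≤ q.2.2}, h, ?_⟩
    rintro ⟨v, v', ε'⟩ hq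
    exact ⟨dstar f T T', le_trans (hstar v v') hq, fun a a' ε'' hle => hle⟩
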